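/- arXiv:2604.20075 — 5 statements merged into one kernel-verified Lean document; each statement's English description precedes it below -/
import Mathlib

section
/- Let K be a closed convex subset of ℝⁿ, z ∈ K, w ∈ ℝⁿ, and t > 0. Let P_K(w) denote the metric projection of w onto K (the point of K closest to w in Euclidean norm). Then ‖P_K(w) − z‖₂ ≤ max{t, (2/t)·sup_{v ∈ (K−z) ∩ t·B₂ⁿ} ⟨w − z, v⟩}, where B₂ⁿ is the closed Euclidean unit ball. -/
open RealInnerProductSpace

/-- Projection lemma onto a closed convex set: if `p` is the metric projection of `w`
onto the closed convex set `K` and `z ∈ K`, then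
`‖p − z‖ ≤ max {t, (2/t)·sup_{v ∈ (K−z) ∩ t·B₂ⁿ} ⟨w − z, v⟩}`. -/
theorem stmt0 {n : ℕ} (K : Set (EuclideanSpace ℝ (Fin n)))
    (hKclosed : IsClosed K) (hKconv : Convex ℝ K)
    (z : EuclideanSpace ℝ (Fin n)) (hz : z ∈ K)
    (w p : EuclideanSpace ℝ (Fin n)) (t : ℝ) (ht : 0 < t)
    (hpK : p ∈ K) (hpmin : ∀ y ∈ K, ‖p - w‖ ≤ ‖y - w‖) :
    ‖p - z‖ ≤ max t ((2 / t) *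
      sSup ((fun v => (⟪w - z, v⟫ : ℝ)) ''
        (((fun u => u - z) '' K) ∩ Metric.closedBall 0 t))) := by
  set r := ‖p - z‖ with hr
  rcases le_or_gt r t with h | h
  · exact le_max_of_le_left h
  -- r > t > 0
  have hr0 : 0 < r := ht.trans h
  -- projection characterization: ⟪w - p, z - p⟫ ≤ 0
  haveI : Nonempty K := ⟨⟨z, hz⟩⟩
  have hinf : ‖w - p‖ = ⨅ y : K, ‖w - y‖ := by
    apply le_antisymm
    · apply le_ciInf
      intro y
      rw [norm_sub_rev, norm_sub_rev w]
      exact hpmin y y.2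
    · exact ciInf_le ⟨0, fun _ ⟨_, h⟩ => h ▸ norm_nonneg _⟩ (⟨p, hpK⟩ : K)
  have hproj : ⟪w - p, z - p⟫ ≤ 0 :=
    (norm_eq_iInf_iff_real_inner_le_zero hKconv hpK).mp hinf z hz
  -- key: ⟪w - z, p - z⟫ ≥ r²
  have hkey : r ^ 2 ≤ ⟪w - z, p - z⟫ := by
    have h1 : ⟪w - z, p - z⟫ = ⟪w - p, p - z⟫ + ⟪p - z, p - z⟫ := by
      rw [← inner_add_left]
      congr 1
      abel
    have h2 : (0:ℝ) ≤ ⟪w - p, p - z⟫ := by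
      have : ⟪w - p, p - z⟫ = - ⟪w - p, z - p⟫ := by
        rw [← inner_neg_right]; congr 1; abel
      rw [this]; linarith
    rw [h1, real_inner_self_eq_norm_sq]
    nlinarith
  -- the element v = (t/r) • (p - z)
  set v : EuclideanSpace ℝ (Fin n) := (t / r) • (p - z) with hv
  have htr0 : 0 ≤ t / r := div_nonneg ht.le hr0.le
  have htr1 : t / r ≤ 1 := (div_le_one hr0).mpr h.le
  have hvmem : v ∈ ((fun u => u - z) '' K) ∩ Metric.closedBall 0 t := by
    constructor
    · refine ⟨z + (t / r) • (p - z), ?_, by rw [hv]; module⟩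
      have := hKconv hz hpK (a := 1 - t / r) (b := t / r) (by linarith) htr0 (by ring)
      convert this using 1
      module
    · rw [Metric.mem_closedBall, dist_zero_right, hv, norm_smul,
        Real.norm_of_nonneg htr0, ← hr]
      rw [div_mul_cancel₀ _ hr0.ne']
  have hbdd : BddAbove ((fun v => (⟪w - z, v⟫ : ℝ)) ''
      (((fun u => u - z) '' K) ∩ Metric.closedBall 0 t)) := by
    refine ⟨‖w - z‖ * t, ?_⟩
    rintro x ⟨u, ⟨_, hu⟩, rfl⟩
    calc ⟪w - z, u⟫ ≤ ‖w - z‖ * ‖u‖ := real_inner_le_norm _ _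
      _ ≤ ‖w - z‖ * t := by
          have : ‖u‖ ≤ t := by
            rwa [Metric.mem_closedBall, dist_zero_right] at hu
          exact mul_le_mul_of_nonneg_left this (norm_nonneg _)
  have hle : t * r ≤ sSup ((fun v => (⟪w - z, v⟫ : ℝ)) ''
      (((fun u => u - z) '' K) ∩ Metric.closedBall 0 t)) := by
    have hmem := le_csSup hbdd ⟨v, hvmem, rfl⟩
    have : t * r ≤ ⟪w - z, v⟫ := by
      rw [hv, real_inner_smul_right]
      have : r ^ 2 ≤ ⟪w - z, p - z⟫ := hkey
      calc t * r = (t / r) * r ^ 2 := by field_simp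
        _ ≤ (t / r) * ⟪w - z, p - z⟫ := mul_le_mul_of_nonneg_left hkey htr0
    linarith
  refine le_max_of_le_right ?_
  rw [div_mul_eq_mul_div, le_div_iff₀ ht]
  nlinarith
end

section
/- Let K ⊂ ℝⁿ be a closed convex set containing x, φ > 0, and let h_x : ℝⁿ → ℝⁿ, η > 0, μ₁ ∈ [0, 1/2), μ₂ ≥ 0 be such that for all u ∈ U we have (1/φ)·sup_{v ∈ (K−x) ∩ φB₂ⁿ} ⟨u − x − η·h_x(u), v⟩ ≤ μ₁‖u − x‖₂ + μ₂, where U ⊃ K ∩ B₂ⁿ(x; d) for some d with (2μ₂ + φ)/(1 − 2μ₁) < d ≤ ∞. Then the sequence defined by x₀ ∈ K ∩ B₂ⁿ(x; d) and x_{t+1} = P_K(x_t − η·h_x(x_t)) satisfies ‖x_t − x‖₂ ≤ (2μ₁)^t ‖x₀ − x‖₂ + (2μ₂ + φ)/(1 − 2μ₁) for all t ≥ 0. -/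
open RealInnerProductSpace

/-- Convergence of projected gradient descent under the RAIC at scale `φ`
for a closed convex set `K` (Theorem `convexK`). The iterates `x t` satisfy
`x (t+1) = P_K (x t − η • h (x t))`, expressed by saying `x (t+1) ∈ K` minimizes
the distance to `x t − η • h (x t)` over `K`. -/
theorem stmt5 {n : ℕ}
    (K U : Set (EuclideanSpace ℝ (Fin n))) (hKclosed : IsClosed K) (hKconv : Convex ℝ K)
    (xs : EuclideanSpace ℝ (Fin n)) (hxs : xs ∈ K)
    (φ η μ₁ μ₂ d : ℝ) (hφ : 0 < φ) (hη : 0 < η)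
    (hμ₁0 : 0 ≤ μ₁) (hμ₁ : μ₁ < 1/2) (hμ₂ : 0 ≤ μ₂)
    (hd : (2 * μ₂ + φ) / (1 - 2 * μ₁) < d)
    (h : EuclideanSpace ℝ (Fin n) → EuclideanSpace ℝ (Fin n))
    (hU : K ∩ Metric.closedBall xs d ⊆ U)
    (hRAIC : ∀ u ∈ U,
      (1 / φ) * sSup ((fun v => (⟪u - xs - η • h u, v⟫ : ℝ)) ''
          (((fun y => y - xs) '' K) ∩ Metric.closedBall 0 φ)) ≤ μ₁ * ‖u - xs‖ + μ₂)
    (x : ℕ → EuclideanSpace ℝ (Fin n))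
    (hx0 : x 0 ∈ K ∩ Metric.closedBall xs d)
    (hstep : ∀ t : ℕ, x (t + 1) ∈ K ∧
      ∀ y ∈ K, ‖x (t + 1) - (x t - η • h (x t))‖ ≤ ‖y - (x t - η • h (x t))‖) :
    ∀ t : ℕ, ‖x t - xs‖ ≤ (2 * μ₁) ^ t * ‖x 0 - xs‖ + (2 * μ₂ + φ) / (1 - 2 * μ₁) := by
  have h2μ : (0:ℝ) < 1 - 2 * μ₁ := by linarith
  set C : ℝ := (2 * μ₂ + φ) / (1 - 2 * μ₁) with hCdef
  have hC0 : 0 ≤ C := div_nonneg (by linarith) h2μ.le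
  have hCeq : (1 - 2 * μ₁) * C = 2 * μ₂ + φ := by
    rw [hCdef, mul_div_assoc', mul_div_cancel_left₀ _ h2μ.ne']
  -- key one-step estimate
  have key : ∀ t, x t ∈ K → ‖x t - xs‖ ≤ d →
      ‖x (t + 1) - xs‖ ≤ 2 * μ₁ * ‖x t - xs‖ + (2 * μ₂ + φ) := by
    intro t hxtK hxtd
    set u := x t with hu
    set w : EuclideanSpace ℝ (Fin n) := u - η • h u with hw
    set p := x (t + 1) with hp
    obtain ⟨hpK, hpmin⟩ := hstep t
    -- variational inequality
    have hvar : ∀ y ∈ K, ⟪w - p, y - p⟫ ≤ 0 := by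
      have hinf : ‖w - p‖ = ⨅ y : K, ‖w - y‖ := by
        haveI : Nonempty K := ⟨⟨xs, hxs⟩⟩
        refine le_antisymm (le_ciInf ?_)
          (ciInf_le ⟨0, fun _ ⟨_, hz⟩ => hz ▸ norm_nonneg _⟩ (⟨p, hpK⟩ : K))
        intro y
        rw [norm_sub_rev, norm_sub_rev w (y : EuclideanSpace ℝ (Fin n))]
        exact hpmin y y.2
      exact (norm_eq_iInf_iff_real_inner_le_zero hKconv hpK).mp hinf
    set r := ‖p - xs‖ with hr
    have hr0 : 0 ≤ r := norm_nonneg _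
    have hnn : 0 ≤ μ₁ * ‖u - xs‖ + μ₂ :=
      add_nonneg (mul_nonneg hμ₁0 (norm_nonneg _)) hμ₂
    by_cases hcase : r ≤ φ
    · have : 0 ≤ 2 * μ₁ * ‖u - xs‖ + 2 * μ₂ := by positivity
      calc r ≤ φ := hcase
        _ ≤ 2 * μ₁ * ‖u - xs‖ + (2 * μ₂ + φ) := by linarith
    · push_neg at hcase
      have hrpos : 0 < r := lt_trans hφ hcase
      set v : EuclideanSpace ℝ (Fin n) := (φ / r) • (p - xs) with hv
      have hfrac0 : 0 ≤ φ / r := div_nonneg hφ.le hr0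
      have hfrac1 : φ / r ≤ 1 := (div_le_one hrpos).mpr hcase.le
      have hxsv : xs + v ∈ K := by
        have := hKconv hxs hpK (a := 1 - φ / r) (b := φ / r)
          (by linarith) hfrac0 (by ring)
        convert this using 1
        rw [hv]
        module
      have hvmem : v ∈ ((fun y => y - xs) '' K) ∩ Metric.closedBall 0 φ := by
        constructor
        · exact ⟨xs + v, hxsv, by show xs + v - xs = v; abel⟩
        · rw [Metric.mem_closedBall, dist_zero_right, hv, norm_smul,
            Real.norm_eq_abs, abs_of_nonneg hfrac0, ← hr]
          rw [div_mul_cancel₀ _ hrpos.ne']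
      -- inner product lower bound
      have hip : φ * r ≤ ⟪u - xs - η • h u, v⟫ := by
        have h1 : 0 ≤ ⟪w - p, p - xs⟫ := by
          have := hvar xs hxs
          have heq : ⟪w - p, xs - p⟫ = - ⟪w - p, p - xs⟫ := by
            rw [← inner_neg_right]; congr 1; abel
          rw [heq] at this; linarith
        have h2 : ⟪w - xs, p - xs⟫ = ⟪w - p, p - xs⟫ + ⟪p - xs, p - xs⟫ := by
          rw [← inner_add_left]; congr 1; abel
        have h3 : r ^ 2 ≤ ⟪w - xs, p - xs⟫ := by
          rw [h2, real_inner_self_eq_norm_sq, ← hr]; linarith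
        have h4 : ⟪u - xs - η • h u, v⟫ = (φ / r) * ⟪w - xs, p - xs⟫ := by
          rw [hv, inner_smul_right, hw]
          congr 2
          abel
        rw [h4]
        have := mul_le_mul_of_nonneg_left h3 hfrac0
        calc φ * r = (φ / r) * r ^ 2 := by field_simp
          _ ≤ (φ / r) * ⟪w - xs, p - xs⟫ := this
      -- the sup dominates
      have hbdd : BddAbove ((fun v => (⟪u - xs - η • h u, v⟫ : ℝ)) ''
          (((fun y => y - xs) '' K) ∩ Metric.closedBall 0 φ)) := by
        refine ⟨‖u - xs - η • h u‖ * φ, ?_⟩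
        rintro s ⟨z, hz, rfl⟩
        have hz2 : ‖z‖ ≤ φ := by
          have := hz.2; rwa [Metric.mem_closedBall, dist_zero_right] at this
        calc ⟪u - xs - η • h u, z⟫ ≤ ‖u - xs - η • h u‖ * ‖z‖ := real_inner_le_norm _ _
          _ ≤ ‖u - xs - η • h u‖ * φ := by
              exact mul_le_mul_of_nonneg_left hz2 (norm_nonneg _)
      have hsup : φ * r ≤ sSup ((fun v => (⟪u - xs - η • h u, v⟫ : ℝ)) ''
          (((fun y => y - xs) '' K) ∩ Metric.closedBall 0 φ)) :=
        le_trans hip (le_csSup hbdd ⟨v, hvmem, rfl⟩)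
      have huU : u ∈ U := hU ⟨hxtK, by rwa [Metric.mem_closedBall, dist_eq_norm]⟩
      have hraic := hRAIC u huU
      have hr_le : r ≤ μ₁ * ‖u - xs‖ + μ₂ := by
        have hmul := mul_le_mul_of_nonneg_left hsup
          (le_of_lt (by positivity : (0:ℝ) < 1 / φ))
        have hrw : (1 / φ) * (φ * r) = r := by field_simp
        linarith
      have : 0 ≤ μ₁ * ‖u - xs‖ + μ₂ := hnn
      linarith
  -- strengthened induction
  have main : ∀ t, x t ∈ K ∧ ‖x t - xs‖ ≤ d ∧
      ‖x t - xs‖ ≤ (2 * μ₁) ^ t * ‖x 0 - xs‖ + C := by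
    intro t
    induction t with
    | zero =>
      refine ⟨hx0.1, ?_, ?_⟩
      · have := hx0.2; rwa [Metric.mem_closedBall, dist_eq_norm] at this
      · simp; linarith [norm_nonneg (x 0 - xs)]
    | succ t ih =>
      obtain ⟨hK', hd', hb'⟩ := ih
      have hstep' := key t hK' hd'
      refine ⟨(hstep t).1, ?_, ?_⟩
      · calc ‖x (t + 1) - xs‖ ≤ 2 * μ₁ * ‖x t - xs‖ + (2 * μ₂ + φ) := hstep'
          _ ≤ 2 * μ₁ * d + (1 - 2 * μ₁) * C := by
              rw [hCeq]
              have := mul_le_mul_of_nonneg_left hd' (by linarith : (0:ℝ) ≤ 2 * μ₁)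
              linarith
          _ ≤ 2 * μ₁ * d + (1 - 2 * μ₁) * d := by
              have := mul_le_mul_of_nonneg_left hd.le h2μ.le
              linarith
          _ = d := by ring
      · calc ‖x (t + 1) - xs‖ ≤ 2 * μ₁ * ‖x t - xs‖ + (2 * μ₂ + φ) := hstep'
          _ ≤ 2 * μ₁ * ((2 * μ₁) ^ t * ‖x 0 - xs‖ + C) + (2 * μ₂ + φ) := by
              have := mul_le_mul_of_nonneg_left hb' (by linarith : (0:ℝ) ≤ 2 * μ₁)
              linarith
          _ = (2 * μ₁) ^ (t + 1) * ‖x 0 - xs‖ + (2 * μ₁ * C + (2 * μ₂ + φ)) := by ring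
          _ = (2 * μ₁) ^ (t + 1) * ‖x 0 - xs‖ + C := by rw [← hCeq]; ring_nf
  exact fun t => (main t).2.2
end

section
/- Let K ⊂ ℝⁿ be a closed cone containing x, and let h_x : ℝⁿ → ℝⁿ, η > 0, μ₁ ∈ [0, 1/2), μ₂ ≥ 0 be such that for all u ∈ U, sup_{v ∈ (K−K) ∩ B₂ⁿ} ⟨u − x − η·h_x(u), v⟩ ≤ μ₁‖u − x‖₂ + μ₂, where U ⊃ K ∩ B₂ⁿ(x; d) for some d with 2μ₂/(1 − 2μ₁) < d ≤ ∞. Assume the projection P_K onto K is well-defined on all iterates. Then the sequence defined by x₀ ∈ K ∩ B₂ⁿ(x; d) and x_{t+1} = P_K(x_t − η·h_x(x_t)) satisfies ‖x_t − x‖₂ ≤ (2μ₁)^t ‖x₀ − x‖₂ + 2μ₂/(1 − 2μ₁) for all t ≥ 0. -/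
/-!
Since `x⋆ ∈ K` and `x_{t+1}` is a nearest point of `K` to `w = x_t - η h(x_t)`, the projection
inequality gives `‖x_{t+1} - x⋆‖² ≤ 2⟪x_{t+1} - x⋆, w - x⋆⟫`. As `K` is a cone, the direction of
`x_{t+1} - x⋆` lies in `K₁ = (K - K) ∩ B`, so the right side is at most
`2‖x_{t+1} - x⋆‖ ‖w - x⋆‖_{K₁°}`, and the RAIC turns this into the one-step bound
`‖x_{t+1} - x⋆‖ ≤ 2μ₁‖x_t - x⋆‖ + 2μ₂`, valid while `x_t` stays in `B(x⋆; d)`.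
Because `2μ₂/(1 - 2μ₁) < d`, the iterates never leave that ball, and unrolling the recursion
gives the geometric bound.
-/

open RealInnerProductSpace Pointwise Metric

section SupportFunction

variable {E : Type*} [NormedAddCommGroup E] [InnerProductSpace ℝ E]

/-- For `S = (K - K) ∩ closedBall 0 1` this is the paper's `‖w‖_{K₁°}`. -/
noncomputable def supportFunction (S : Set E) (w : E) : ℝ :=
  sSup ((fun v => ⟪w, v⟫) '' S)

lemma bddAbove_inner_image_inter_closedBall (S : Set E) (w : E) :
    BddAbove ((fun v => ⟪w, v⟫) '' (S ∩ closedBall 0 1)) := by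
  refine ⟨‖w‖, ?_⟩
  rintro _ ⟨v, ⟨-, hv⟩, rfl⟩
  calc ⟪w, v⟫ ≤ ‖w‖ * ‖v‖ := real_inner_le_norm w v
    _ ≤ ‖w‖ * 1 := by gcongr; simpa using hv
    _ = ‖w‖ := mul_one _

lemma supportFunction_sub_inter_closedBall_nonneg {K : Set E} (hK : K.Nonempty) (w : E) :
    0 ≤ supportFunction ((K - K) ∩ closedBall 0 1) w := by
  obtain ⟨y, hy⟩ := hK
  have hmem : (0 : E) ∈ (K - K) ∩ closedBall 0 1 :=
    ⟨⟨y, hy, y, hy, sub_self y⟩, mem_closedBall_self zero_le_one⟩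
  have h0 := le_csSup (bddAbove_inner_image_inter_closedBall (K - K) w) ⟨0, hmem, rfl⟩
  simpa only [supportFunction, inner_zero_right] using h0

lemma inner_le_norm_mul_supportFunction {K : Set E}
    (hK : ∀ c : ℝ, 0 ≤ c → ∀ v ∈ K, c • v ∈ K) {z y : E} (hz : z ∈ K) (hy : y ∈ K) (w : E) :
    ⟪w, z - y⟫ ≤ ‖z - y‖ * supportFunction ((K - K) ∩ closedBall 0 1) w := by
  rcases eq_or_ne z y with rfl | hzy
  · simp
  have hr : 0 < ‖z - y‖ := norm_pos_iff.2 (sub_ne_zero.2 hzy)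
  set v := ‖z - y‖⁻¹ • (z - y)
  have hv : v ∈ (K - K) ∩ closedBall 0 1 := by
    refine ⟨⟨_, hK _ (inv_nonneg.2 hr.le) z hz, _, hK _ (inv_nonneg.2 hr.le) y hy,
      (smul_sub _ _ _).symm⟩, ?_⟩
    rw [mem_closedBall_zero_iff, norm_smul, norm_inv, norm_norm, inv_mul_cancel₀ hr.ne']
  have hzv : z - y = ‖z - y‖ • v := by rw [smul_inv_smul₀ hr.ne']
  calc ⟪w, z - y⟫ = ‖z - y‖ * ⟪w, v⟫ := by rw [hzv, real_inner_smul_right, ← hzv]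
    _ ≤ ‖z - y‖ * supportFunction ((K - K) ∩ closedBall 0 1) w := by
      gcongr
      exact le_csSup (bddAbove_inner_image_inter_closedBall (K - K) w) ⟨v, hv, rfl⟩

lemma norm_sub_sq_le_two_inner_of_norm_sub_le {p w y : E} (h : ‖p - w‖ ≤ ‖y - w‖) :
    ‖p - y‖ ^ 2 ≤ 2 * ⟪p - y, w - y⟫ := by
  have hpw : ‖p - w‖ ^ 2 = ‖p - y‖ ^ 2 - 2 * ⟪p - y, w - y⟫ + ‖w - y‖ ^ 2 := by
    rw [← norm_sub_sq_real, sub_sub_sub_cancel_right]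
  have hsq : ‖p - w‖ ^ 2 ≤ ‖w - y‖ ^ 2 := by
    rw [norm_sub_rev w y]
    gcongr
  linarith

lemma norm_sub_le_two_mul_supportFunction {K : Set E}
    (hK : ∀ c : ℝ, 0 ≤ c → ∀ v ∈ K, c • v ∈ K) {p w y : E} (hp : p ∈ K) (hy : y ∈ K)
    (hnear : ‖p - w‖ ≤ ‖y - w‖) :
    ‖p - y‖ ≤ 2 * supportFunction ((K - K) ∩ closedBall 0 1) (w - y) := by
  have hsq := norm_sub_sq_le_two_inner_of_norm_sub_le hnear
  have hinner := inner_le_norm_mul_supportFunction hK hp hy (w - y)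
  have hs := supportFunction_sub_inter_closedBall_nonneg ⟨y, hy⟩ (w - y)
  rw [real_inner_comm] at hsq
  nlinarith [norm_nonneg (p - y)]

end SupportFunction

lemma le_pow_mul_add_div_of_le_mul_add (e : ℕ → ℝ) {q c d : ℝ} (hq0 : 0 ≤ q) (hq1 : q < 1)
    (hc : 0 ≤ c) (hcd : c / (1 - q) ≤ d) (h0 : e 0 ≤ d)
    (hstep : ∀ t, e t ≤ d → e (t + 1) ≤ q * e t + c) (t : ℕ) :
    e t ≤ q ^ t * e 0 + c / (1 - q) := by
  have h1q : 0 < 1 - q := sub_pos.2 hq1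
  have hfix : q * (c / (1 - q)) + c = c / (1 - q) := by field_simp; ring
  have hcd' : q * d + c ≤ d := by
    have := (div_le_iff₀ h1q).1 hcd
    linarith
  suffices e t ≤ d ∧ e t ≤ q ^ t * e 0 + c / (1 - q) from this.2
  induction t with
  | zero => exact ⟨h0, by simpa using div_nonneg hc h1q.le⟩
  | succ t ih =>
    have hnext := hstep t ih.1
    refine ⟨by nlinarith [ih.1], ?_⟩
    calc e (t + 1) ≤ q * e t + c := hnext
      _ ≤ q * (q ^ t * e 0 + c / (1 - q)) + c := by gcongr; exact ih.2
      _ = q ^ (t + 1) * e 0 + c / (1 - q) := by rw [pow_succ]; linarith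

theorem stmt6_general {n : ℕ}
    (K U : Set (EuclideanSpace ℝ (Fin n)))
    (hKcone : ∀ c : ℝ, 0 ≤ c → ∀ v ∈ K, c • v ∈ K)
    (xs : EuclideanSpace ℝ (Fin n)) (hxs : xs ∈ K)
    (η μ₁ μ₂ d : ℝ)
    (hμ₁0 : 0 ≤ μ₁) (hμ₁ : μ₁ < 1/2) (hμ₂ : 0 ≤ μ₂)
    (hd : 2 * μ₂ / (1 - 2 * μ₁) < d)
    (h : EuclideanSpace ℝ (Fin n) → EuclideanSpace ℝ (Fin n))
    (hU : K ∩ Metric.closedBall xs d ⊆ U)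
    (hRAIC : ∀ u ∈ U,
      sSup ((fun v => (⟪u - xs - η • h u, v⟫ : ℝ)) ''
          ((K - K) ∩ Metric.closedBall 0 1)) ≤ μ₁ * ‖u - xs‖ + μ₂)
    (x : ℕ → EuclideanSpace ℝ (Fin n))
    (hx0 : x 0 ∈ K ∩ Metric.closedBall xs d)
    (hstep : ∀ t : ℕ, x (t + 1) ∈ K ∧
      ∀ y ∈ K, ‖x (t + 1) - (x t - η • h (x t))‖ ≤ ‖y - (x t - η • h (x t))‖) :
    ∀ t : ℕ, ‖x t - xs‖ ≤ (2 * μ₁) ^ t * ‖x 0 - xs‖ + 2 * μ₂ / (1 - 2 * μ₁) := by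
  have hxK : ∀ t, x t ∈ K
    | 0 => hx0.1
    | t + 1 => (hstep t).1
  refine le_pow_mul_add_div_of_le_mul_add (fun t => ‖x t - xs‖) (by positivity) (by linarith)
    (by positivity) hd.le (mem_closedBall_iff_norm.1 hx0.2) fun t ht => ?_
  have hu : x t ∈ U := hU ⟨hxK t, mem_closedBall_iff_norm.2 ht⟩
  calc ‖x (t + 1) - xs‖
      ≤ 2 * supportFunction ((K - K) ∩ closedBall 0 1) (x t - η • h (x t) - xs) :=
        norm_sub_le_two_mul_supportFunction hKcone (hstep t).1 hxs ((hstep t).2 xs hxs)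
    _ ≤ 2 * (μ₁ * ‖x t - xs‖ + μ₂) := by
        rw [sub_right_comm]
        exact mul_le_mul_of_nonneg_left (hRAIC _ hu) zero_le_two
    _ = 2 * μ₁ * ‖x t - xs‖ + 2 * μ₂ := by ring

/-- Convergence of projected gradient descent under the RAIC for a closed cone `K`
(Theorem `coneK`). Here `K₁ = (K − K) ∩ B₂ⁿ` and the RAIC bounds the `K₁°` dual norm of
the deviation of the actual step from the ideal step. -/
theorem stmt6 {n : ℕ}
    (K U : Set (EuclideanSpace ℝ (Fin n))) (hKclosed : IsClosed K)
    (hKcone : ∀ c : ℝ, 0 ≤ c → ∀ v ∈ K, c • v ∈ K)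
    (xs : EuclideanSpace ℝ (Fin n)) (hxs : xs ∈ K)
    (η μ₁ μ₂ d : ℝ) (hη : 0 < η)
    (hμ₁0 : 0 ≤ μ₁) (hμ₁ : μ₁ < 1/2) (hμ₂ : 0 ≤ μ₂)
    (hd : 2 * μ₂ / (1 - 2 * μ₁) < d)
    (h : EuclideanSpace ℝ (Fin n) → EuclideanSpace ℝ (Fin n))
    (hU : K ∩ Metric.closedBall xs d ⊆ U)
    (hRAIC : ∀ u ∈ U,
      sSup ((fun v => (⟪u - xs - η • h u, v⟫ : ℝ)) ''
          ((K - K) ∩ Metric.closedBall 0 1)) ≤ μ₁ * ‖u - xs‖ + μ₂)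
    (x : ℕ → EuclideanSpace ℝ (Fin n))
    (hx0 : x 0 ∈ K ∩ Metric.closedBall xs d)
    (hstep : ∀ t : ℕ, x (t + 1) ∈ K ∧
      ∀ y ∈ K, ‖x (t + 1) - (x t - η • h (x t))‖ ≤ ‖y - (x t - η • h (x t))‖) :
    ∀ t : ℕ, ‖x t - xs‖ ≤ (2 * μ₁) ^ t * ‖x 0 - xs‖ + 2 * μ₂ / (1 - 2 * μ₁) :=
  stmt6_general K U hKcone xs hxs η μ₁ μ₂ d hμ₁0 hμ₁ hμ₂ hd h hU hRAIC x hx0 hstep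
end

section
/- Let λ > 0 and let g ~ N(0,1). Let D = {(2k−1)λ : k ∈ ℤ} be the set of discontinuities of the modulo function m_λ. Then for every t ∈ (0, λ/2), P(dist(g, D) ≤ t) ≤ √(8/π)·t·exp(−λ²/8)/(1 − exp(−λ²/8)). -/
/-!
Every point of `D` is `±(2n+1)λ` with `n : ℕ`, so the event lies in the union of the closed
balls of radius `t` around these points. On the pair of balls around `±(2n+1)λ` every point has
modulus at least `(2n+1)λ - t ≥ (2n+1/2)λ` (as `t < λ/2`), so the standard Gaussian density there
is at most `r^(n+1)/√(2π)` with `r = e^{-λ²/8}`. The pair has total length `4t`, and summing the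
geometric series gives `4t r/(√(2π)(1-r)) = √(8/π) t r/(1-r)`.
-/

open MeasureTheory ProbabilityTheory Metric Set Real

lemma isClosed_setOf_odd_mul {lam : ℝ} (hlam : 0 < lam) :
    IsClosed {x : ℝ | ∃ k : ℤ, x = (2 * k - 1) * lam} := by
  have hrange : {x : ℝ | ∃ k : ℤ, x = (2 * k - 1) * lam} =
      range fun k : ℤ ↦ (2 * k - 1) * lam := by
    ext x; simp [eq_comm]
  rw [hrange]
  refine (isClosedEmbedding_of_pairwise_le_dist (ε := 2 * lam) (by positivity)
    fun k j hkj ↦ ?_).isClosed_range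
  have hkj : (1 : ℝ) ≤ |(k : ℝ) - j| := by exact_mod_cast Int.one_le_abs (sub_ne_zero.2 hkj)
  change 2 * lam ≤ dist _ _
  rw [Real.dist_eq, show (2 * (k : ℝ) - 1) * lam - (2 * j - 1) * lam = 2 * lam * (k - j) by ring,
    abs_mul, abs_of_pos (by positivity)]
  nlinarith

lemma exists_nat_two_mul_sub_one_eq (k : ℤ) :
    ∃ n : ℕ, 2 * (k : ℝ) - 1 = 2 * n + 1 ∨ 2 * (k : ℝ) - 1 = -(2 * n + 1) := by
  obtain ⟨n, rfl | rfl⟩ := Int.eq_nat_or_neg k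
  · cases n with
    | zero => exact ⟨0, Or.inr (by push_cast; ring)⟩
    | succ m => exact ⟨m, Or.inl (by push_cast; ring)⟩
  · exact ⟨n, Or.inr (by push_cast; ring)⟩

lemma gaussianReal_le_volume_mul_of_le_abs {s : Set ℝ} {d : ℝ} (hd : 0 ≤ d)
    (hs : ∀ x ∈ s, d ≤ |x|) :
    gaussianReal 0 1 s ≤ volume s * ENNReal.ofReal ((√(2 * π))⁻¹ * exp (-d ^ 2 / 2)) := by
  rw [gaussianReal_apply 0 one_ne_zero, mul_comm, ← setLIntegral_const]
  refine setLIntegral_mono measurable_const fun x hx ↦ ?_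
  refine ENNReal.ofReal_le_ofReal ?_
  simp only [gaussianPDFReal, NNReal.coe_one, mul_one, sub_zero]
  refine mul_le_mul_of_nonneg_left (exp_le_exp.2 ?_) (by positivity)
  nlinarith [sq_abs x, hs x hx]

lemma gaussianReal_closedBall_le {c t : ℝ} (ht : t ≤ |c|) :
    gaussianReal 0 1 (closedBall c t) ≤
      ENNReal.ofReal (2 * t / √(2 * π) * exp (-(|c| - t) ^ 2 / 2)) := by
  refine (gaussianReal_le_volume_mul_of_le_abs (sub_nonneg.2 ht) fun x hx ↦ ?_).trans_eq ?_
  · have := abs_sub_abs_le_abs_sub c x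
    rw [mem_closedBall, dist_comm, Real.dist_eq] at hx
    linarith
  · rw [Real.volume_closedBall, ← ENNReal.ofReal_mul' (by positivity)]
    ring_nf

lemma exp_neg_sq_le_pow {lam t : ℝ} (hlam : 0 < lam) (ht : t < lam / 2) (n : ℕ) :
    exp (-((2 * n + 1) * lam - t) ^ 2 / 2) ≤ exp (-lam ^ 2 / 8) ^ (n + 1) := by
  rw [← exp_nat_mul, exp_le_exp]
  have hgap : (2 * n + 1 / 2) * lam ≤ (2 * n + 1) * lam - t := by linarith
  have hsq : ((2 * n + 1 / 2) * lam) ^ 2 ≤ ((2 * n + 1) * lam - t) ^ 2 := by gcongr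
  push_cast
  nlinarith [mul_nonneg n.cast_nonneg (sq_nonneg lam),
    mul_nonneg (sq_nonneg (n : ℝ)) (sq_nonneg lam)]

lemma tsum_ofReal_mul_pow_succ {a r : ℝ} (ha : 0 ≤ a) (hr0 : 0 ≤ r) (hr1 : r < 1) :
    ∑' n : ℕ, ENNReal.ofReal (a * r ^ (n + 1)) = ENNReal.ofReal (a * r / (1 - r)) := by
  have hgeom := summable_geometric_of_lt_one hr0 hr1
  simp_rw [pow_succ', ← mul_assoc]
  rw [← ENNReal.ofReal_tsum_of_nonneg (fun n ↦ by positivity) (hgeom.mul_left _), tsum_mul_left,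
    tsum_geometric_of_lt_one hr0 hr1, div_eq_mul_inv]

lemma sqrt_eight_div_pi : √(8 / π) = 4 / √(2 * π) := by
  rw [show 8 / π = 4 ^ 2 / (2 * π) by field_simp; norm_num, sqrt_div' _ (by positivity),
    sqrt_sq (by norm_num)]

lemma gaussianReal_closedBall_union_neg_le {c t : ℝ} (ht : t ≤ |c|) :
    gaussianReal 0 1 (closedBall c t ∪ closedBall (-c) t) ≤
      ENNReal.ofReal (4 * t / √(2 * π) * exp (-(|c| - t) ^ 2 / 2)) := by
  refine (measure_union_le _ _).trans ?_
  have hneg := gaussianReal_closedBall_le (c := -c) (t := t)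
  rw [abs_neg] at hneg
  refine (add_le_add (gaussianReal_closedBall_le ht) (hneg ht)).trans_eq ?_
  rw [← two_mul, ← ENNReal.ofReal_ofNat 2, ← ENNReal.ofReal_mul zero_le_two]
  ring_nf

lemma setOf_infDist_le_subset_iUnion_closedBall {lam t : ℝ} (hlam : 0 < lam) :
    {v : ℝ | infDist v {x : ℝ | ∃ k : ℤ, x = (2 * k - 1) * lam} ≤ t} ⊆
      ⋃ n : ℕ, closedBall ((2 * n + 1) * lam) t ∪ closedBall (-((2 * n + 1) * lam)) t := by
  intro v hv
  obtain ⟨x, hx, hvx⟩ := (isClosed_setOf_odd_mul hlam).exists_infDist_eq_dist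
    ⟨lam, 1, by push_cast; ring⟩ v
  obtain ⟨k, rfl⟩ := hx
  rw [mem_ofPred_eq, hvx] at hv
  obtain ⟨n, hn | hn⟩ := exists_nat_two_mul_sub_one_eq k
  · exact mem_iUnion.2 ⟨n, Or.inl (by rwa [hn] at hv)⟩
  · exact mem_iUnion.2 ⟨n, Or.inr (by rwa [hn, neg_mul] at hv)⟩

/-- Small-ball probability near the discontinuities `D = {(2k−1)λ : k ∈ ℤ}` of the
modulo function: for `g ~ N(0,1)` and `0 < t < λ/2`,
`P(dist(g, D) ≤ t) ≤ √(8/π)·t·e^{−λ²/8}/(1 − e^{−λ²/8})`. -/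
theorem stmt8 (lam t : ℝ) (hlam : 0 < lam) (ht0 : 0 < t) (ht : t < lam / 2) :
    (gaussianReal 0 1)
        {v : ℝ | Metric.infDist v {x : ℝ | ∃ k : ℤ, x = (2 * k - 1) * lam} ≤ t} ≤
      ENNReal.ofReal (Real.sqrt (8 / Real.pi) * t * Real.exp (-lam ^ 2 / 8) /
        (1 - Real.exp (-lam ^ 2 / 8))) := by
  set r := exp (-lam ^ 2 / 8)
  have hr0 : 0 ≤ r := (exp_pos _).le
  have hr1 : r < 1 := exp_lt_one_iff.2 (by nlinarith)
  have hball (n : ℕ) : gaussianReal 0 1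
      (closedBall ((2 * n + 1) * lam) t ∪ closedBall (-((2 * n + 1) * lam)) t) ≤
        ENNReal.ofReal (4 * t / √(2 * π) * r ^ (n + 1)) := by
    have hc : |(2 * n + 1) * lam| = (2 * n + 1) * lam := abs_of_pos (by positivity)
    refine (gaussianReal_closedBall_union_neg_le (by rw [hc]; nlinarith)).trans
      (ENNReal.ofReal_le_ofReal ?_)
    rw [hc]
    exact mul_le_mul_of_nonneg_left (exp_neg_sq_le_pow hlam ht n) (by positivity)
  calc _ ≤ _ := measure_mono (setOf_infDist_le_subset_iUnion_closedBall hlam)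
    _ ≤ ∑' n : ℕ, ENNReal.ofReal (4 * t / √(2 * π) * r ^ (n + 1)) :=
      (measure_iUnion_le _).trans (ENNReal.tsum_le_tsum hball)
    _ = _ := by
      rw [tsum_ofReal_mul_pow_succ (by positivity) hr0 hr1, sqrt_eight_div_pi]
      ring_nf
end

section
/- Let f̃ : ℝ → ℝ be a function whose set of discontinuities D satisfies: any two distinct points of D are at distance at least φ₂ > 0; every discontinuity is a jump with jump height at most h := φ₃/μ; and f̃ is φ₄-Lipschitz on every open interval disjoint from D. Then for all b₁, b₂ ∈ ℝ, |f̃(b₁) − f̃(b₂)| ≤ φ₄|b₁ − b₂| + (|b₁ − b₂|/φ₂ + 1)·h. -/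
private lemma sep_fin (D : Set ℝ) (φ₂ : ℝ) (hφ₂ : 0 < φ₂)
    (hsep : ∀ ξ₁ ∈ D, ∀ ξ₂ ∈ D, ξ₁ ≠ ξ₂ → φ₂ ≤ |ξ₁ - ξ₂|) (c d : ℝ) :
    (D ∩ Set.Icc c d).Finite := by
  apply Set.Finite.of_finite_image (f := fun ξ => ⌊(ξ - c) / φ₂⌋)
  · apply Set.Finite.subset (Set.finite_Icc (0 : ℤ) ⌊(d - c) / φ₂⌋)
    rintro k ⟨ξ, ⟨hξD, hξc, hξd⟩, rfl⟩
    refine ⟨Int.floor_nonneg.2 (div_nonneg (by linarith) hφ₂.le), Int.floor_le_floor ?_⟩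
    gcongr
  · intro x hx y hy hxy
    by_contra hne
    have hs := hsep x hx.1 y hy.1 hne
    simp only at hxy
    have hfl : ((⌊(x - c) / φ₂⌋ : ℤ) : ℝ) = ((⌊(y - c) / φ₂⌋ : ℤ) : ℝ) := by exact_mod_cast hxy
    have h1 : (x - c) / φ₂ < ⌊(x - c) / φ₂⌋ + 1 := Int.lt_floor_add_one _
    have h2 : (y - c) / φ₂ < ⌊(y - c) / φ₂⌋ + 1 := Int.lt_floor_add_one _
    have h3 : (⌊(x - c) / φ₂⌋ : ℝ) ≤ (x - c) / φ₂ := Int.floor_le _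
    have h4 : (⌊(y - c) / φ₂⌋ : ℝ) ≤ (y - c) / φ₂ := Int.floor_le _
    have e1 : (x - c) / φ₂ * φ₂ = x - c := div_mul_cancel₀ _ hφ₂.ne'
    have e2 : (y - c) / φ₂ * φ₂ = y - c := div_mul_cancel₀ _ hφ₂.ne'
    have : |x - y| < φ₂ := by
      rw [abs_lt]; constructor <;> nlinarith
    linarith

private lemma sep_card (D : Set ℝ) (φ₂ : ℝ) (hφ₂ : 0 < φ₂)
    (hsep : ∀ ξ₁ ∈ D, ∀ ξ₂ ∈ D, ξ₁ ≠ ξ₂ → φ₂ ≤ |ξ₁ - ξ₂|) (c d : ℝ) (hcd : c ≤ d)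
    (hS : (D ∩ Set.Ico c d).Finite) :
    (hS.toFinset.card : ℝ) ≤ (d - c) / φ₂ + 1 := by
  set N : ℤ := ⌊(d - c) / φ₂⌋ with hN
  have hN0 : 0 ≤ N := Int.floor_nonneg.2 (div_nonneg (by linarith) hφ₂.le)
  have hcard : hS.toFinset.card ≤ (Finset.Icc (0 : ℤ) N).card := by
    apply Finset.card_le_card_of_injOn (fun ξ => ⌊(ξ - c) / φ₂⌋)
    · intro ξ hξ
      rw [Set.Finite.coe_toFinset] at hξ
      obtain ⟨hξD, hξc, hξd⟩ := hξ
      rw [Finset.mem_coe, Finset.mem_Icc]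
      refine ⟨Int.floor_nonneg.2 (div_nonneg (by linarith) hφ₂.le), Int.floor_le_floor ?_⟩
      gcongr
    · intro x hx y hy hxy
      rw [Set.Finite.coe_toFinset] at hx hy
      by_contra hne
      have hs := hsep x hx.1 y hy.1 hne
      simp only at hxy
      have hfl : ((⌊(x - c) / φ₂⌋ : ℤ) : ℝ) = ((⌊(y - c) / φ₂⌋ : ℤ) : ℝ) := by exact_mod_cast hxy
      have h1 : (x - c) / φ₂ < ⌊(x - c) / φ₂⌋ + 1 := Int.lt_floor_add_one _
      have h2 : (y - c) / φ₂ < ⌊(y - c) / φ₂⌋ + 1 := Int.lt_floor_add_one _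
      have h3 : (⌊(x - c) / φ₂⌋ : ℝ) ≤ (x - c) / φ₂ := Int.floor_le _
      have h4 : (⌊(y - c) / φ₂⌋ : ℝ) ≤ (y - c) / φ₂ := Int.floor_le _
      have e1 : (x - c) / φ₂ * φ₂ = x - c := div_mul_cancel₀ _ hφ₂.ne'
      have e2 : (y - c) / φ₂ * φ₂ = y - c := div_mul_cancel₀ _ hφ₂.ne'
      have : |x - y| < φ₂ := by
        rw [abs_lt]; constructor <;> nlinarith
      linarith
  have hIcc : (Finset.Icc (0 : ℤ) N).card = (N + 1).toNat := by
    rw [Int.card_Icc]; ring_nf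
  have hNle : (N : ℝ) ≤ (d - c) / φ₂ := Int.floor_le _
  calc (hS.toFinset.card : ℝ) ≤ ((N + 1).toNat : ℝ) := by exact_mod_cast hIcc ▸ hcard
    _ = (N : ℝ) + 1 := by
        have h5 : ((N + 1).toNat : ℤ) = N + 1 := Int.toNat_of_nonneg (by linarith)
        exact_mod_cast h5
    _ ≤ (d - c) / φ₂ + 1 := by linarith

private lemma escape_right (D : Set ℝ) (φ₂ : ℝ) (hφ₂ : 0 < φ₂)
    (hsep : ∀ ξ₁ ∈ D, ∀ ξ₂ ∈ D, ξ₁ ≠ ξ₂ → φ₂ ≤ |ξ₁ - ξ₂|) (b : ℝ) :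
    ∃ b' > b, Set.Ioo b b' ∩ D = ∅ := by
  have hfin : (D ∩ Set.Ioo b (b + 1)).Finite :=
    (sep_fin D φ₂ hφ₂ hsep b (b + 1)).subset (by
      rintro x ⟨h1, h2, h3⟩; exact ⟨h1, h2.le, h3.le⟩)
  by_cases hne : (D ∩ Set.Ioo b (b + 1)).Nonempty
  · obtain ⟨ξ₀, hξ₀, hmin⟩ := hfin.exists_minimalFor id _ hne
    refine ⟨(b + ξ₀) / 2, by linarith [hξ₀.2.1], ?_⟩
    ext x
    simp only [Set.mem_inter_iff, Set.mem_Ioo, Set.mem_empty_iff_false, iff_false, not_and]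
    rintro ⟨hx1, hx2⟩ hxD
    have hxI : x ∈ D ∩ Set.Ioo b (b + 1) := ⟨hxD, hx1, by linarith [hξ₀.2.2]⟩
    have := hmin hxI (le_of_lt (by simp only [id]; linarith [hξ₀.2.1]))
    simp only [id] at this
    linarith [hξ₀.2.1]
  · refine ⟨b + 1, by linarith, ?_⟩
    rw [Set.not_nonempty_iff_eq_empty] at hne
    rw [← hne]; ext x; simp [Set.mem_inter_iff]; tauto

private lemma escape_left (D : Set ℝ) (φ₂ : ℝ) (hφ₂ : 0 < φ₂)
    (hsep : ∀ ξ₁ ∈ D, ∀ ξ₂ ∈ D, ξ₁ ≠ ξ₂ → φ₂ ≤ |ξ₁ - ξ₂|) (b : ℝ) :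
    ∃ a < b, Set.Ioo a b ∩ D = ∅ := by
  have hfin : (D ∩ Set.Ioo (b - 1) b).Finite :=
    (sep_fin D φ₂ hφ₂ hsep (b - 1) b).subset (by
      rintro x ⟨h1, h2, h3⟩; exact ⟨h1, h2.le, h3.le⟩)
  by_cases hne : (D ∩ Set.Ioo (b - 1) b).Nonempty
  · obtain ⟨ξ₀, hξ₀, hmax⟩ := hfin.exists_maximalFor id _ hne
    refine ⟨(ξ₀ + b) / 2, by linarith [hξ₀.2.2], ?_⟩
    ext x
    simp only [Set.mem_inter_iff, Set.mem_Ioo, Set.mem_empty_iff_false, iff_false, not_and]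
    rintro ⟨hx1, hx2⟩ hxD
    have hxI : x ∈ D ∩ Set.Ioo (b - 1) b := ⟨hxD, by linarith [hξ₀.2.1], hx2⟩
    have := hmax hxI (le_of_lt (by simp only [id]; linarith [hξ₀.2.2]))
    simp only [id] at this
    linarith [hξ₀.2.2]
  · refine ⟨b - 1, by linarith, ?_⟩
    rw [Set.not_nonempty_iff_eq_empty] at hne
    rw [← hne]; ext x; simp [Set.mem_inter_iff]; tauto

private lemma endpointC (f : ℝ → ℝ) (D : Set ℝ) (φ₂ φ₄ h : ℝ)
    (hφ₂ : 0 < φ₂) (hφ₄ : 0 ≤ φ₄)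
    (hsep : ∀ ξ₁ ∈ D, ∀ ξ₂ ∈ D, ξ₁ ≠ ξ₂ → φ₂ ≤ |ξ₁ - ξ₂|)
    (hjump : ∀ ξ ∈ D, ∃ L R : ℝ,
      Filter.Tendsto f (nhdsWithin ξ (Set.Iio ξ)) (nhds L) ∧
      Filter.Tendsto f (nhdsWithin ξ (Set.Ioi ξ)) (nhds R) ∧
      |R - L| ≤ h ∧ f ξ = L)
    (hlip : ∀ a b : ℝ, Set.Ioo a b ∩ D = ∅ →
      ∀ u ∈ Set.Ioo a b, ∀ v ∈ Set.Ioo a b, |f u - f v| ≤ φ₄ * |u - v|)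
    {a b u : ℝ} (hD : Set.Ioo a b ∩ D = ∅) (hu : u ∈ Set.Ioo a b) :
    |f b - f u| ≤ φ₄ * (b - u) := by
  obtain ⟨hua, hub⟩ := hu
  by_cases hb : b ∈ D
  · obtain ⟨L, R, hL, hR, hLR, hfb⟩ := hjump b hb
    have hmem : Set.Ioo u b ∈ nhdsWithin b (Set.Iio b) :=
      Ioo_mem_nhdsLT_of_mem ⟨hub, le_refl b⟩
    have hten : Filter.Tendsto (fun v => |f v - f u|) (nhdsWithin b (Set.Iio b))
        (nhds |L - f u|) := ((hL.sub tendsto_const_nhds).abs)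
    have hev : ∀ᶠ v in nhdsWithin b (Set.Iio b), |f v - f u| ≤ φ₄ * (b - u) := by
      filter_upwards [hmem] with v hv
      have h1 := hlip a b hD v ⟨lt_trans hua hv.1, hv.2⟩ u ⟨hua, hub⟩
      have h2 : |v - u| = v - u := abs_of_nonneg (by linarith [hv.1])
      rw [h2] at h1
      have : φ₄ * (v - u) ≤ φ₄ * (b - u) := by
        apply mul_le_mul_of_nonneg_left (by linarith [hv.2]) hφ₄
      linarith
    have := le_of_tendsto hten hev
    rwa [hfb]
  · obtain ⟨b', hb'gt, hb'⟩ := escape_right D φ₂ hφ₂ hsep b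
    have hD' : Set.Ioo a b' ∩ D = ∅ := by
      ext x
      simp only [Set.mem_inter_iff, Set.mem_Ioo, Set.mem_empty_iff_false, iff_false, not_and]
      rintro ⟨hx1, hx2⟩ hxD
      rcases lt_trichotomy x b with hxb | hxb | hxb
      · exact Set.eq_empty_iff_forall_notMem.mp hD x ⟨⟨hx1, hxb⟩, hxD⟩
      · exact hb (hxb ▸ hxD)
      · exact Set.eq_empty_iff_forall_notMem.mp hb' x ⟨⟨hxb, hx2⟩, hxD⟩
    have h1 := hlip a b' hD' b ⟨lt_trans hua hub, hb'gt⟩ u ⟨hua, lt_trans hub hb'gt⟩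
    rwa [abs_of_nonneg (by linarith : (0:ℝ) ≤ b - u)] at h1

private lemma jumpD (f : ℝ → ℝ) (D : Set ℝ) (φ₂ φ₄ h : ℝ)
    (hφ₂ : 0 < φ₂) (hφ₄ : 0 ≤ φ₄)
    (hsep : ∀ ξ₁ ∈ D, ∀ ξ₂ ∈ D, ξ₁ ≠ ξ₂ → φ₂ ≤ |ξ₁ - ξ₂|)
    (hjump : ∀ ξ ∈ D, ∃ L R : ℝ,
      Filter.Tendsto f (nhdsWithin ξ (Set.Iio ξ)) (nhds L) ∧
      Filter.Tendsto f (nhdsWithin ξ (Set.Ioi ξ)) (nhds R) ∧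
      |R - L| ≤ h ∧ f ξ = L)
    (hlip : ∀ a b : ℝ, Set.Ioo a b ∩ D = ∅ →
      ∀ u ∈ Set.Ioo a b, ∀ v ∈ Set.Ioo a b, |f u - f v| ≤ φ₄ * |u - v|)
    {ξ b : ℝ} (hξ : ξ ∈ D) (hξb : ξ < b) (hD : Set.Ioo ξ b ∩ D = ∅) :
    |f b - f ξ| ≤ φ₄ * (b - ξ) + h := by
  obtain ⟨L, R, hL, hR, hLR, hfξ⟩ := hjump ξ hξ
  have hmem : Set.Ioo ξ b ∈ nhdsWithin ξ (Set.Ioi ξ) :=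
    Ioo_mem_nhdsGT_of_mem ⟨le_refl ξ, hξb⟩
  have hten : Filter.Tendsto (fun u => |f b - f u|) (nhdsWithin ξ (Set.Ioi ξ))
      (nhds |f b - R|) := ((tendsto_const_nhds.sub hR).abs)
  have hev : ∀ᶠ u in nhdsWithin ξ (Set.Ioi ξ), |f b - f u| ≤ φ₄ * (b - ξ) := by
    filter_upwards [hmem] with u hu
    have h1 := endpointC f D φ₂ φ₄ h hφ₂ hφ₄ hsep hjump hlip hD hu
    have : φ₄ * (b - u) ≤ φ₄ * (b - ξ) := by
      apply mul_le_mul_of_nonneg_left (by linarith [hu.1]) hφ₄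
    linarith
  have hkey : |f b - R| ≤ φ₄ * (b - ξ) := le_of_tendsto hten hev
  calc |f b - f ξ| = |f b - L| := by rw [hfξ]
    _ ≤ |f b - R| + |R - L| := by
        have := abs_sub_le (f b) R L
        linarith
    _ ≤ φ₄ * (b - ξ) + h := by linarith

private lemma main_ind (f : ℝ → ℝ) (D : Set ℝ) (φ₂ φ₄ h : ℝ)
    (hφ₂ : 0 < φ₂) (hφ₄ : 0 ≤ φ₄) (hh : 0 ≤ h)
    (hsep : ∀ ξ₁ ∈ D, ∀ ξ₂ ∈ D, ξ₁ ≠ ξ₂ → φ₂ ≤ |ξ₁ - ξ₂|)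
    (hjump : ∀ ξ ∈ D, ∃ L R : ℝ,
      Filter.Tendsto f (nhdsWithin ξ (Set.Iio ξ)) (nhds L) ∧
      Filter.Tendsto f (nhdsWithin ξ (Set.Ioi ξ)) (nhds R) ∧
      |R - L| ≤ h ∧ f ξ = L)
    (hlip : ∀ a b : ℝ, Set.Ioo a b ∩ D = ∅ →
      ∀ u ∈ Set.Ioo a b, ∀ v ∈ Set.Ioo a b, |f u - f v| ≤ φ₄ * |u - v|) :
    ∀ n : ℕ, ∀ a b : ℝ, a ≤ b → ∀ hfin : (D ∩ Set.Ico a b).Finite,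
      hfin.toFinset.card = n → |f b - f a| ≤ φ₄ * (b - a) + n * h := by
  intro n
  induction n using Nat.strong_induction_on with
  | _ n IH =>
    intro a b hab hfin hcard
    rcases eq_or_lt_of_le hab with rfl | hlt
    · simp only [sub_self, abs_zero]
      positivity
    by_cases hne : (D ∩ Set.Ico a b).Nonempty
    · -- ξ = max of discontinuities in [a, b)
      have hSne : hfin.toFinset.Nonempty := by
        rwa [Set.Finite.toFinset_nonempty]
      set ξ := hfin.toFinset.max' hSne with hξdef
      have hξmem : ξ ∈ D ∩ Set.Ico a b := by
        have := hfin.toFinset.max'_mem hSne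
        rwa [Set.Finite.mem_toFinset] at this
      obtain ⟨hξD, hξa, hξb⟩ := hξmem
      have hIoo : Set.Ioo ξ b ∩ D = ∅ := by
        ext x
        simp only [Set.mem_inter_iff, Set.mem_Ioo, Set.mem_empty_iff_false, iff_false, not_and]
        rintro ⟨hx1, hx2⟩ hxD
        have hxS : x ∈ hfin.toFinset := by
          rw [Set.Finite.mem_toFinset]; exact ⟨hxD, le_of_lt (lt_of_le_of_lt hξa hx1), hx2⟩
        have := hfin.toFinset.le_max' x hxS
        rw [← hξdef] at this
        linarith
      have hstep : |f b - f ξ| ≤ φ₄ * (b - ξ) + h :=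
        jumpD f D φ₂ φ₄ h hφ₂ hφ₄ hsep hjump hlip hξD hξb hIoo
      -- the rest: D ∩ [a, ξ) has n - 1 elements
      have hsub : (D ∩ Set.Ico a ξ) = (D ∩ Set.Ico a b) \ {ξ} := by
        ext x
        simp only [Set.mem_inter_iff, Set.mem_Ico, Set.mem_diff, Set.mem_singleton_iff]
        constructor
        · rintro ⟨hxD, hx1, hx2⟩
          exact ⟨⟨hxD, hx1, lt_trans hx2 hξb⟩, by intro hc; rw [hc] at hx2; exact lt_irrefl _ hx2⟩
        · rintro ⟨⟨hxD, hx1, hx2⟩, hxne⟩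
          refine ⟨hxD, hx1, ?_⟩
          have hxS : x ∈ hfin.toFinset := by rw [Set.Finite.mem_toFinset]; exact ⟨hxD, hx1, hx2⟩
          have := hfin.toFinset.le_max' x hxS
          rw [← hξdef] at this
          exact lt_of_le_of_ne this hxne
      have hfin2 : (D ∩ Set.Ico a ξ).Finite := hfin.subset (by rw [hsub]; exact Set.diff_subset)
      have hn1 : n ≥ 1 := by
        rw [← hcard]
        exact Finset.card_pos.mpr hSne
      have hcard2 : hfin2.toFinset.card = n - 1 := by
        have : hfin2.toFinset = hfin.toFinset.erase ξ := by
          ext x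
          rw [Set.Finite.mem_toFinset, Finset.mem_erase, Set.Finite.mem_toFinset, hsub]
          simp [Set.mem_diff, and_comm]
        rw [this, Finset.card_erase_of_mem (hfin.toFinset.max'_mem hSne), hcard]
      have hIH := IH (n - 1) (by omega) a ξ hξa hfin2 hcard2
      have hcast : ((n - 1 : ℕ) : ℝ) = (n : ℝ) - 1 := by
        have : (1 : ℕ) ≤ n := hn1
        push_cast [Nat.cast_sub this]
        ring
      rw [hcast] at hIH
      calc |f b - f a| ≤ |f b - f ξ| + |f ξ - f a| := by
            have := abs_sub_le (f b) (f ξ) (f a); linarith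
        _ ≤ (φ₄ * (b - ξ) + h) + (φ₄ * (ξ - a) + ((n : ℝ) - 1) * h) := by linarith
        _ = φ₄ * (b - a) + n * h := by ring
    · -- no discontinuities in [a, b)
      rw [Set.not_nonempty_iff_eq_empty] at hne
      have haD : a ∉ D := by
        intro haD
        exact Set.eq_empty_iff_forall_notMem.mp hne a ⟨haD, le_refl a, hlt⟩
      obtain ⟨a', ha'lt, ha'⟩ := escape_left D φ₂ hφ₂ hsep a
      have hD' : Set.Ioo a' b ∩ D = ∅ := by
        ext x
        simp only [Set.mem_inter_iff, Set.mem_Ioo, Set.mem_empty_iff_false, iff_false, not_and]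
        rintro ⟨hx1, hx2⟩ hxD
        rcases lt_trichotomy x a with hxa | hxa | hxa
        · exact Set.eq_empty_iff_forall_notMem.mp ha' x ⟨⟨hx1, hxa⟩, hxD⟩
        · exact haD (hxa ▸ hxD)
        · exact Set.eq_empty_iff_forall_notMem.mp hne x ⟨hxD, le_of_lt hxa, hx2⟩
      have h1 := endpointC f D φ₂ φ₄ h hφ₂ hφ₄ hsep hjump hlip hD' ⟨ha'lt, hlt⟩
      have : (0:ℝ) ≤ (n : ℝ) * h := by positivity
      linarith


/-- A piecewise Lipschitz function whose discontinuities are `φ₂`-separated jumps of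
height at most `h` satisfies
`|f̃(b₁) − f̃(b₂)| ≤ φ₄|b₁ − b₂| + (|b₁ − b₂|/φ₂ + 1)·h` for all `b₁, b₂`. -/
theorem stmt10 (f : ℝ → ℝ) (D : Set ℝ) (φ₂ φ₄ h : ℝ)
    (hφ₂ : 0 < φ₂) (hφ₄ : 0 ≤ φ₄) (hh : 0 ≤ h)
    (hsep : ∀ ξ₁ ∈ D, ∀ ξ₂ ∈ D, ξ₁ ≠ ξ₂ → φ₂ ≤ |ξ₁ - ξ₂|)
    (hjump : ∀ ξ ∈ D, ∃ L R : ℝ,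
      Filter.Tendsto f (nhdsWithin ξ (Set.Iio ξ)) (nhds L) ∧
      Filter.Tendsto f (nhdsWithin ξ (Set.Ioi ξ)) (nhds R) ∧
      |R - L| ≤ h ∧ f ξ = L)
    (hlip : ∀ a b : ℝ, Set.Ioo a b ∩ D = ∅ →
      ∀ u ∈ Set.Ioo a b, ∀ v ∈ Set.Ioo a b, |f u - f v| ≤ φ₄ * |u - v|) :
    ∀ b₁ b₂ : ℝ, |f b₁ - f b₂| ≤ φ₄ * |b₁ - b₂| + (|b₁ - b₂| / φ₂ + 1) * h := by
  have main : ∀ a b : ℝ, a ≤ b →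
      |f a - f b| ≤ φ₄ * |a - b| + (|a - b| / φ₂ + 1) * h := by
    intro a b hab
    have hfin : (D ∩ Set.Ico a b).Finite :=
      (sep_fin D φ₂ hφ₂ hsep a b).subset (by
        rintro x ⟨h1, h2, h3⟩; exact ⟨h1, h2, h3.le⟩)
    have h1 := main_ind f D φ₂ φ₄ h hφ₂ hφ₄ hh hsep hjump hlip
      hfin.toFinset.card a b hab hfin rfl
    have h2 := sep_card D φ₂ hφ₂ hsep a b hab hfin
    have habs : |a - b| = b - a := by
      rw [abs_sub_comm]; exact abs_of_nonneg (by linarith)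
    rw [abs_sub_comm (f a), habs]
    have h3 : (hfin.toFinset.card : ℝ) * h ≤ ((b - a) / φ₂ + 1) * h :=
      mul_le_mul_of_nonneg_right h2 hh
    linarith
  intro b₁ b₂
  rcases le_total b₁ b₂ with hle | hle
  · exact main b₁ b₂ hle
  · rw [abs_sub_comm (f b₁), abs_sub_comm b₁]
    exact main b₂ b₁ hle
end
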